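/- Let 0 < r < c be real numbers, θ ∈ ℝ, and I ⊆ {1, …, 5}. Let η₁, …, η₅ ∈ ℂ be the five roots of η⁵ = −r/c and set τⱼ(w) = (w − ηⱼ)/(1 − conj(ηⱼ)·w). For w in the closed unit disc define x̃(w) = e^{−iθ}·√(r·w⁵ + c)·∏_{j∉I}τⱼ(w) and z̃(w) = e^{iθ}·√(r·w⁵ + c)·∏_{j∈I}τⱼ(w), where √ denotes the principal square root (well-defined since Re(r·w⁵ + c) ≥ c − r > 0 for |w| ≤ 1). Then: (i) x̃ and z̃ are complex-differentiable on the open unit disc; (ii) x̃(w)·z̃(w) = c·w⁵ + r for all w in the closed unit disc; and (iii) for every w with |w| = 1, |x̃(w)| = |z̃(w)| and |x̃(w)·z̃(w)/w⁵ − c| = r. -/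

import Mathlib

/-!
The five points `η j` are exactly the roots of `w⁵ + r/c`, so `∏ (w - η j) = w⁵ + r/c`, and
reversing this polynomial gives `∏ (1 - conj (η j) w) = 1 + (r/c) w⁵`. Hence the full Blaschke
product is `(c w⁵ + r)/(r w⁵ + c)`, and the square root factors of `x̃` and `z̃` multiply to the
denominator, so `x̃ z̃ = c w⁵ + r`. Since `‖η j‖⁵ = r/c < 1`, every Blaschke factor is holomorphic
on the closed disc and unimodular on the circle, which gives `|x̃| = |z̃|` there; and
`‖(c w⁵ + r)/w⁵ - c‖ = ‖r/w⁵‖ = r` on the circle.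
-/

open Finset

/-- The Blaschke factor `τ_η(w) = (w − η)/(1 − conj(η)·w)`. -/
noncomputable def blaschke (η w : ℂ) : ℂ := (w - η) / (1 - (starRingEnd ℂ) η * w)

/-- The limit disc `x̃` from Proposition `limDiscs`. -/
noncomputable def xTilde (r c θ : ℝ) (S : Finset (Fin 5)) (η : Fin 5 → ℂ) (w : ℂ) : ℂ :=
  Complex.exp (-(θ : ℂ) * Complex.I) * ((r : ℂ) * w ^ 5 + c) ^ ((1 : ℂ) / 2) *
    ∏ j ∈ Sᶜ, blaschke (η j) w

/-- The limit disc `z̃` from Proposition `limDiscs`. -/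
noncomputable def zTilde (r c θ : ℝ) (S : Finset (Fin 5)) (η : Fin 5 → ℂ) (w : ℂ) : ℂ :=
  Complex.exp ((θ : ℂ) * Complex.I) * ((r : ℂ) * w ^ 5 + c) ^ ((1 : ℂ) / 2) *
    ∏ j ∈ S, blaschke (η j) w

open Polynomial

section RootsOfPowSub

variable {K ι : Type*} [Field K] [Fintype ι] [Nonempty ι] {η : ι → K} {a : K}

theorem prod_sub_eq_pow_sub (hinj : Function.Injective η)
    (hroot : ∀ j, η j ^ Fintype.card ι = a) (w : K) :
    ∏ j, (w - η j) = w ^ Fintype.card ι - a := by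
  have hpoly : X ^ Fintype.card ι - C a = ∏ j, (X - C (η j)) :=
    eq_of_monic_of_dvd_of_natDegree_le (monic_prod_X_sub_C _ _)
      (monic_X_pow_sub_C a Fintype.card_ne_zero)
      (Fintype.prod_dvd_of_coprime (pairwise_coprime_X_sub_C hinj)
        fun j => dvd_iff_isRoot.2 (by simp [hroot]))
      (by simp)
  simpa [eval_prod] using congrArg (eval w) hpoly.symm

theorem prod_one_sub_mul_eq (hinj : Function.Injective η)
    (hroot : ∀ j, η j ^ Fintype.card ι = a) (w : K) :
    ∏ j, (1 - η j * w) = 1 - a * w ^ Fintype.card ι := by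
  rcases eq_or_ne w 0 with rfl | hw
  · simp [zero_pow Fintype.card_ne_zero]
  have hrev : ∀ j, 1 - η j * w = w * (w⁻¹ - η j) := fun j => by field_simp
  simp only [hrev, prod_mul_distrib, prod_const, card_univ, prod_sub_eq_pow_sub hinj hroot]
  rw [mul_sub, ← mul_pow, mul_inv_cancel₀ hw, one_pow]
  ring

end RootsOfPowSub

section Blaschke

open ComplexConjugate

theorem one_sub_conj_mul_ne_zero {η w : ℂ} (hη : ‖η‖ < 1) (hw : ‖w‖ ≤ 1) :
    1 - conj η * w ≠ 0 := by
  refine sub_ne_zero.2 fun h => ?_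
  have hlt : ‖conj η * w‖ < 1 := by
    rw [norm_mul, Complex.norm_conj]
    nlinarith [norm_nonneg η, norm_nonneg w]
  rw [← h, norm_one] at hlt
  exact lt_irrefl _ hlt

theorem norm_blaschke_of_norm_eq_one {η w : ℂ} (hη : ‖η‖ < 1) (hw : ‖w‖ = 1) :
    ‖blaschke η w‖ = 1 := by
  have hwconj : w * conj w = 1 := by
    rw [Complex.mul_conj, Complex.normSq_eq_norm_sq, hw]
    norm_num
  have hnum : w - η = w * conj (1 - conj η * w) := by
    simp only [map_sub, map_mul, map_one, Complex.conj_conj]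
    linear_combination η * hwconj
  rw [blaschke, norm_div, hnum, norm_mul, Complex.norm_conj, hw, one_mul,
    div_self (norm_ne_zero_iff.2 (one_sub_conj_mul_ne_zero hη hw.le))]

theorem norm_prod_blaschke_of_norm_eq_one {ι : Type*} {η : ι → ℂ} {T : Finset ι}
    (hη : ∀ j ∈ T, ‖η j‖ < 1) {w : ℂ} (hw : ‖w‖ = 1) :
    ‖∏ j ∈ T, blaschke (η j) w‖ = 1 := by
  rw [norm_prod]
  exact prod_eq_one fun j hj => norm_blaschke_of_norm_eq_one (hη j hj) hw

theorem differentiableOn_prod_blaschke {ι : Type*} {η : ι → ℂ} {T : Finset ι}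
    (hη : ∀ j ∈ T, ‖η j‖ < 1) :
    DifferentiableOn ℂ (fun w => ∏ j ∈ T, blaschke (η j) w) (Metric.ball 0 1) := by
  refine DifferentiableOn.fun_finsetProd fun j hj w hw => ?_
  have hw1 : ‖w‖ ≤ 1 := (mem_ball_zero_iff.1 hw).le
  exact (DifferentiableAt.div (c := fun w => w - η j) (d := fun w => 1 - conj (η j) * w)
    (by fun_prop) (by fun_prop) (one_sub_conj_mul_ne_zero (hη j hj) hw1)).differentiableWithinAt

theorem prod_blaschke {ι : Type*} [Fintype ι] [Nonempty ι] {η : ι → ℂ} {a : ℂ}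
    (hinj : Function.Injective η) (hroot : ∀ j, η j ^ Fintype.card ι = a) (w : ℂ) :
    ∏ j, blaschke (η j) w = (w ^ Fintype.card ι - a) / (1 - conj a * w ^ Fintype.card ι) := by
  simp only [blaschke, prod_div_distrib]
  rw [prod_sub_eq_pow_sub hinj hroot, prod_one_sub_mul_eq (η := fun j => conj (η j))
    ((starRingEnd ℂ).injective.comp hinj) (fun j => by rw [← map_pow, hroot])]

end Blaschke

section OfRealMulPowAdd

variable {r c : ℝ} (hrc : |r| < c)
include hrc

theorem re_ofReal_mul_pow_add_ofReal_pos {w : ℂ} (hw : ‖w‖ ≤ 1) (n : ℕ) :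
    0 < ((r : ℂ) * w ^ n + c).re := by
  have hre : |(w ^ n).re| ≤ 1 :=
    (Complex.abs_re_le_norm _).trans (norm_pow w n ▸ pow_le_one₀ (norm_nonneg w) hw)
  have hrw : |r * (w ^ n).re| ≤ |r| := by
    rw [abs_mul]
    exact mul_le_of_le_one_right (abs_nonneg r) hre
  simp only [Complex.add_re, Complex.re_ofReal_mul, Complex.ofReal_re]
  linarith [neg_abs_le (r * (w ^ n).re)]

theorem differentiableOn_sqrt_ofReal_mul_pow_add (n : ℕ) :
    DifferentiableOn ℂ (fun w : ℂ => ((r : ℂ) * w ^ n + c) ^ ((1 : ℂ) / 2))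
      (Metric.ball 0 1) := fun w hw =>
  (DifferentiableAt.cpow (f := fun w : ℂ => (r : ℂ) * w ^ n + c) (by fun_prop)
    (differentiableAt_const _) (Complex.mem_slitPlane_iff.2 (Or.inl
      (re_ofReal_mul_pow_add_ofReal_pos hrc (mem_ball_zero_iff.1 hw).le n)))
    ).differentiableWithinAt

theorem norm_lt_one_of_pow_eq_neg_div {z : ℂ} {n : ℕ} (hn : n ≠ 0)
    (hz : z ^ n = -(r / c : ℂ)) : ‖z‖ < 1 := by
  have hc : 0 < c := (abs_nonneg r).trans_lt hrc
  refine (pow_lt_one_iff_of_nonneg (norm_nonneg z) hn).1 ?_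
  rw [← norm_pow, hz, norm_neg, ← Complex.ofReal_div, Complex.norm_real, Real.norm_eq_abs,
    abs_div, abs_of_pos hc, div_lt_one hc]
  exact hrc

end OfRealMulPowAdd

section LimitDiscs

variable {r c θ : ℝ} {S : Finset (Fin 5)} {η : Fin 5 → ℂ}

theorem xTilde_mul_zTilde (w : ℂ) :
    xTilde r c θ S η w * zTilde r c θ S η w =
      ((r : ℂ) * w ^ 5 + c) * ∏ j, blaschke (η j) w := by
  set q : ℂ := (r : ℂ) * w ^ 5 + c
  have hexp : Complex.exp (-(θ : ℂ) * Complex.I) * Complex.exp ((θ : ℂ) * Complex.I) = 1 := by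
    rw [← Complex.exp_add, neg_mul, neg_add_cancel, Complex.exp_zero]
  have hsqrt : q ^ ((1 : ℂ) / 2) * q ^ ((1 : ℂ) / 2) = q := by
    rw [← sq, one_div]
    exact_mod_cast Complex.cpow_nat_inv_pow q two_ne_zero
  calc xTilde r c θ S η w * zTilde r c θ S η w
      = (Complex.exp (-(θ : ℂ) * Complex.I) * Complex.exp ((θ : ℂ) * Complex.I)) *
          (q ^ ((1 : ℂ) / 2) * q ^ ((1 : ℂ) / 2)) *
          ((∏ j ∈ Sᶜ, blaschke (η j) w) * ∏ j ∈ S, blaschke (η j) w) := by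
        simp only [xTilde, zTilde, q]
        ring
    _ = q * ∏ j, blaschke (η j) w := by rw [hexp, hsqrt, prod_compl_mul_prod, one_mul]

theorem xTilde_mul_zTilde_eq (hrc : |r| < c) (hroot : ∀ j, η j ^ 5 = -(r / c : ℂ))
    (hinj : Function.Injective η) {w : ℂ} (hw : ‖w‖ ≤ 1) :
    xTilde r c θ S η w * zTilde r c θ S η w = c * w ^ 5 + r := by
  have hc : (c : ℂ) ≠ 0 := Complex.ofReal_ne_zero.2 ((abs_nonneg r).trans_lt hrc).ne'
  have hq : (r : ℂ) * w ^ 5 + c ≠ 0 := fun h => by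
    simpa [h] using re_ofReal_mul_pow_add_ofReal_pos hrc hw 5
  rw [xTilde_mul_zTilde, prod_blaschke hinj (by simpa using hroot)]
  simp only [Fintype.card_fin, map_neg, map_div₀, Complex.conj_ofReal]
  rw [show 1 - -((r : ℂ) / c) * w ^ 5 = ((r : ℂ) * w ^ 5 + c) / c by field_simp; ring]
  field_simp
  ring

theorem norm_xTilde_eq_norm_zTilde (hη : ∀ j, ‖η j‖ < 1) {w : ℂ} (hw : ‖w‖ = 1) :
    ‖xTilde r c θ S η w‖ = ‖zTilde r c θ S η w‖ := by
  simp only [xTilde, zTilde, norm_mul, Complex.norm_exp,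
    norm_prod_blaschke_of_norm_eq_one (fun j _ => hη j) hw]
  simp

end LimitDiscs

theorem norm_mul_pow_add_div_pow_sub_of_norm_eq_one {r c : ℝ} (hr : 0 ≤ r) {w : ℂ}
    (hw : ‖w‖ = 1) (n : ℕ) :
    ‖((c : ℂ) * w ^ n + r) / w ^ n - c‖ = r := by
  have hwn : w ^ n ≠ 0 := pow_ne_zero n (norm_ne_zero_iff.1 (by rw [hw]; exact one_ne_zero))
  have hsimp : ((c : ℂ) * w ^ n + r) / w ^ n - c = r / w ^ n := by
    field_simp
    ring
  rw [hsimp, norm_div, norm_pow, hw, one_pow, div_one, Complex.norm_of_nonneg hr]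

/-- Proposition `limDiscs`: the limit discs `u_I^θ` in `ℂP(1,1,4)` are holomorphic on
the open unit disc, satisfy `x̃·z̃ = c·w⁵ + r` on the closed unit disc, and their
boundary lies on the Chekanov-type torus: `|x̃| = |z̃|` and `|x̃z̃/w⁵ − c| = r`
on the unit circle. -/
theorem stmt_15 (r c : ℝ) (hr : 0 < r) (hrc : r < c) (θ : ℝ) (S : Finset (Fin 5))
    (η : Fin 5 → ℂ) (hroot : ∀ j, η j ^ 5 = -(r / c : ℂ))
    (hinj : Function.Injective η) :
    DifferentiableOn ℂ (xTilde r c θ S η) (Metric.ball 0 1) ∧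
    DifferentiableOn ℂ (zTilde r c θ S η) (Metric.ball 0 1) ∧
    (∀ w ∈ Metric.closedBall (0 : ℂ) 1,
      xTilde r c θ S η w * zTilde r c θ S η w = c * w ^ 5 + r) ∧
    (∀ w : ℂ, ‖w‖ = 1 →
      ‖xTilde r c θ S η w‖ = ‖zTilde r c θ S η w‖ ∧
      ‖xTilde r c θ S η w * zTilde r c θ S η w / w ^ 5 - c‖ = r) := by
  have habs : |r| < c := by rwa [abs_of_pos hr]
  have hη (j : Fin 5) : ‖η j‖ < 1 := norm_lt_one_of_pow_eq_neg_div habs (by norm_num) (hroot j)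
  have hsqrt := differentiableOn_sqrt_ofReal_mul_pow_add habs 5
  have hB (T : Finset (Fin 5)) := differentiableOn_prod_blaschke (T := T) fun j _ => hη j
  refine ⟨((differentiableOn_const _).mul hsqrt).mul (hB _),
    ((differentiableOn_const _).mul hsqrt).mul (hB _),
    fun w hw => xTilde_mul_zTilde_eq habs hroot hinj (mem_closedBall_zero_iff.1 hw),
    fun w hw => ⟨norm_xTilde_eq_norm_zTilde hη hw, ?_⟩⟩
  rw [xTilde_mul_zTilde_eq habs hroot hinj hw.le]
  exact norm_mul_pow_add_div_pow_sub_of_norm_eq_one hr.le hw 5
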